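/- Let r, θ be real numbers with 4.999 ≤ r ≤ 5 and 1 ≤ θ ≤ 2.13. Then the cubic q(x) = 1 − (r − θ)x + (r − 2θ)x² + θx³ has a real root in the open interval (0, 0.56) and a real root in the open interval (0.56, 1). -/

import Mathlib

/-- The cubic `q(x) = 1 - (r - θ)x + (r - 2θ)x² + θx³`. -/
def q (r θ x : ℝ) : ℝ :=
  1 - (r - θ) * x + (r - 2 * θ) * x ^ 2 + θ * x ^ 3

/-!
`q r θ` takes the value `1` at both `0` and `1`, while `q r θ 0.56 = 1 - 0.2464 r + 0.108416 θ`
is negative in the given range of parameters; the intermediate value theorem gives a root on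
either side of `0.56`.
-/

open Set

lemma continuous_q (r θ : ℝ) : Continuous (q r θ) := by
  unfold q
  fun_prop

lemma q_zero (r θ : ℝ) : q r θ 0 = 1 := by
  simp [q]

lemma q_one (r θ : ℝ) : q r θ 1 = 1 := by
  unfold q
  ring

lemma q_eq_at_056 (r θ : ℝ) : q r θ 0.56 = 1 - 0.2464 * r + 0.108416 * θ := by
  unfold q
  ring

lemma q_at_056_neg {r θ : ℝ} (hr : 4.999 ≤ r) (hθ : θ ≤ 2.13) : q r θ 0.56 < 0 := by
  rw [q_eq_at_056]
  linarith

theorem roots_beta_gamma_general (r θ : ℝ) (hr1 : 4.999 ≤ r) (hθ2 : θ ≤ 2.13) :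
    (∃ γ : ℝ, 0 < γ ∧ γ < 0.56 ∧ q r θ γ = 0) ∧
    (∃ β : ℝ, 0.56 < β ∧ β < 1 ∧ q r θ β = 0) := by
  have hneg := q_at_056_neg hr1 hθ2
  have hzero_mem : (0 : ℝ) ∈ Ioo (q r θ 0.56) 1 := ⟨hneg, one_pos⟩
  constructor
  · obtain ⟨γ, ⟨hγ0, hγ1⟩, hγ⟩ := intermediate_value_Ioo' (by norm_num : (0 : ℝ) ≤ 0.56)
      (continuous_q r θ).continuousOn (by rwa [q_zero])
    exact ⟨γ, hγ0, hγ1, hγ⟩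
  · obtain ⟨β, ⟨hβ0, hβ1⟩, hβ⟩ := intermediate_value_Ioo (by norm_num : (0.56 : ℝ) ≤ 1)
      (continuous_q r θ).continuousOn (by rwa [q_one])
    exact ⟨β, hβ0, hβ1, hβ⟩

/-- For `4.999 ≤ r ≤ 5` and `1 ≤ θ ≤ 2.13`, the cubic `q` has a real root in
`(0, 0.56)` and a real root in `(0.56, 1)`. -/
theorem roots_beta_gamma (r θ : ℝ) (hr1 : 4.999 ≤ r) (hr2 : r ≤ 5)
    (hθ1 : 1 ≤ θ) (hθ2 : θ ≤ 2.13) :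
    (∃ γ : ℝ, 0 < γ ∧ γ < 0.56 ∧ q r θ γ = 0) ∧
    (∃ β : ℝ, 0.56 < β ∧ β < 1 ∧ q r θ β = 0) :=
  roots_beta_gamma_general r θ hr1 hθ2
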